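/- For all indices 1 ≤ i, j ≤ ℓ, the operators K_i and E_j on F satisfy the quantum group relation K_i ∘ E_j ∘ K_i^{−1} = q_i^{a_{ij}}·E_j, as an identity of ℂ(s)-linear endomorphisms of F. -/
import Mathlib


open MvPolynomial Finset

set_option synthInstance.maxHeartbeats 1000000
set_option maxHeartbeats 1000000

noncomputable section

/-- The base field `ℂ(s)`. -/
abbrev K0 := RatFunc ℂ

/-- The variables. -/
abbrev Var (ℓ : ℕ) (m l : Fin ℓ → ℕ) := ((i : Fin ℓ) × Fin (m i)) ⊕ ((i : Fin ℓ) × Fin (l i))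

/-- The rational function field over `ℂ(s)` in the given variables. -/
abbrev FF (ℓ : ℕ) (m l : Fin ℓ → ℕ) := FractionRing (MvPolynomial (Var ℓ m l) K0)

variable (ℓ : ℕ) (m l : Fin ℓ → ℕ) (d : Fin ℓ → ℕ) (a : Fin ℓ → Fin ℓ → ℤ)

def cstHom : K0 →+* FF ℓ m l :=
  (algebraMap (MvPolynomial (Var ℓ m l) K0) (FF ℓ m l)).comp
    (C : K0 →+* MvPolynomial (Var ℓ m l) K0)

def cst (c : K0) : FF ℓ m l := cstHom ℓ m l c

/-- The variable `V_{i,k}`. -/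
def V (i : Fin ℓ) (k : Fin (m i)) : FF ℓ m l :=
  algebraMap (MvPolynomial (Var ℓ m l) K0) (FF ℓ m l) (X (Sum.inl ⟨i, k⟩))

/-- The variable `W_{i,t}`. -/
def W (i : Fin ℓ) (t : Fin (l i)) : FF ℓ m l :=
  algebraMap (MvPolynomial (Var ℓ m l) K0) (FF ℓ m l) (X (Sum.inr ⟨i, t⟩))

/-- `s ∈ ℂ(s)`. -/
def sElt : K0 := RatFunc.X

/-- `q = s²`. -/
def qElt : K0 := RatFunc.X ^ 2

/-- `q^e` for an integer exponent `e`. -/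
def qz (e : ℤ) : K0 := qElt ^ e

/-- `q_i^e = q^{d_i·e}`. -/
def qiz (i : Fin ℓ) (e : ℤ) : K0 := qElt ^ ((d i : ℤ) * e)

/-- `q_i − q_i⁻¹`. -/
def qdiff (i : Fin ℓ) : K0 := qiz ℓ d i 1 - qiz ℓ d i (-1)

/-- `c_i = s^{Σ_j d_j·m_j·a_{ji}}`. -/
def cElt (i : Fin ℓ) : K0 := sElt ^ (∑ j : Fin ℓ, (d j : ℤ) * (m j : ℤ) * a j i)

/-- The algebra automorphism of the polynomial ring rescaling the variable `w` by the
nonzero constant `c` and fixing all other variables. -/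
def scalePoly (c : K0) (hc : c ≠ 0) (w : Var ℓ m l) :
    MvPolynomial (Var ℓ m l) K0 ≃ₐ[K0] MvPolynomial (Var ℓ m l) K0 :=
  AlgEquiv.ofAlgHom
    (aeval (fun j => if j = w then MvPolynomial.C c * X j else X j))
    (aeval (fun j => if j = w then MvPolynomial.C c⁻¹ * X j else X j))
    (by
      apply MvPolynomial.algHom_ext; intro j
      by_cases h : j = w <;>
        simp [h, ← mul_assoc, ← C_mul, mul_inv_cancel₀ hc, inv_mul_cancel₀ hc])
    (by
      apply MvPolynomial.algHom_ext; intro j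
      by_cases h : j = w <;>
        simp [h, ← mul_assoc, ← C_mul, mul_inv_cancel₀ hc, inv_mul_cancel₀ hc])

/-- The induced automorphism of `F`. -/
def scaleField (c : K0) (hc : c ≠ 0) (w : Var ℓ m l) : FF ℓ m l ≃+* FF ℓ m l :=
  IsFractionRing.ringEquivOfRingEquiv (scalePoly ℓ m l c hc w).toRingEquiv

/-- `u_{i,k}` : the automorphism `V_{i,k} ↦ q^{d_i}·V_{i,k}`. -/
def uik (i : Fin ℓ) (k : Fin (m i)) : FF ℓ m l ≃+* FF ℓ m l :=
  scaleField ℓ m l (qElt ^ (d i)) (pow_ne_zero _ (pow_ne_zero _ RatFunc.X_ne_zero))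
    (Sum.inl ⟨i, k⟩)

/-- The field `ℂ(s)({W_{i,t}})` of rational functions in the `W`-variables only:
the coefficient field for the polynomials `R_i^{(±)}`. -/
abbrev WField := FractionRing (MvPolynomial ((i : Fin ℓ) × Fin (l i)) K0)

/-- `W_{i,t}` as an element of `ℂ(s)({W_{i,t}})`. -/
def Wsmall (i : Fin ℓ) (t : Fin (l i)) : WField ℓ l :=
  algebraMap (MvPolynomial ((i : Fin ℓ) × Fin (l i)) K0) (WField ℓ l) (X ⟨i, t⟩)

/-- The natural embedding `ℂ(s)({W_{i,t}}) ↪ F`. -/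
def wEmb : WField ℓ l →+* FF ℓ m l :=
  IsFractionRing.lift (g :=
    ((algebraMap (MvPolynomial (Var ℓ m l) K0) (FF ℓ m l)).comp
      (rename (Sum.inr : ((i : Fin ℓ) × Fin (l i)) → Var ℓ m l)).toRingHom))
    ((IsFractionRing.injective (MvPolynomial (Var ℓ m l) K0) (FF ℓ m l)).comp
      (rename_injective _ Sum.inr_injective))

/-- Evaluation of a polynomial with coefficients in `ℂ(s)({W_{i,t}})` at a point of `F`. -/
def Rval (P : Polynomial (WField ℓ l)) (x : FF ℓ m l) : FF ℓ m l :=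
  Polynomial.eval₂ (wEmb ℓ m l) x P

/-- The element `K_i = c_i·Π_t W_{i,t}^{−1}·Π_{j,p} V_{j,p}^{a_{ji}}` of `F`. -/
def Kelt (i : Fin ℓ) : FF ℓ m l :=
  cst ℓ m l (cElt ℓ m d a i) * (∏ t : Fin (l i), (W ℓ m l i t)⁻¹) *
    ∏ j : Fin ℓ, ∏ p : Fin (m j), (V ℓ m l j p) ^ (a j i)

/-- Multiplication by `K_i`. -/
def Kop (i : Fin ℓ) : FF ℓ m l → FF ℓ m l := fun f => Kelt ℓ m l d a i * f

/-- Multiplication by `K_i⁻¹`. -/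
def Kinv (i : Fin ℓ) : FF ℓ m l → FF ℓ m l := fun f => (Kelt ℓ m l d a i)⁻¹ * f

/-- The operator `E_i`. -/
def Eop (Rp : (i : Fin ℓ) → Polynomial (WField ℓ l)) (i : Fin ℓ) :
    FF ℓ m l → FF ℓ m l := fun f =>
  cst ℓ m l (cElt ℓ m d a i / qdiff ℓ d i) * (∏ p : Fin (m i), V ℓ m l i p) *
    (∏ j ∈ univ.filter (fun j => i < j), ∏ p : Fin (m j), (V ℓ m l j p) ^ (a j i)) *
    ∑ k : Fin (m i),
      ((V ℓ m l i k) ^ (-2 : ℤ) * Rval ℓ m l (Rp i) ((V ℓ m l i k) ^ 2) *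
        (∏ j ∈ univ.filter (fun j => i < j), ∏ r ∈ range (-(a j i)).toNat, ∏ p : Fin (m j),
          ((V ℓ m l i k) ^ 2
            - cst ℓ m l (qz ((d j : ℤ) * (a j i + 2 * ((r : ℤ) + 1)))) * (V ℓ m l j p) ^ 2)) /
        (∏ p ∈ univ.erase k, ((V ℓ m l i k) ^ 2 - (V ℓ m l i p) ^ 2))) *
      (uik ℓ m l d i k).symm f

/-! ### Auxiliary lemmas -/

lemma scaleField_symm_algebraMap (c : K0) (hc : c ≠ 0) (w : Var ℓ m l)
    (p : MvPolynomial (Var ℓ m l) K0) :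
    (scaleField ℓ m l c hc w).symm (algebraMap (MvPolynomial (Var ℓ m l) K0) (FF ℓ m l) p)
      = algebraMap (MvPolynomial (Var ℓ m l) K0) (FF ℓ m l)
          ((scalePoly ℓ m l c hc w).symm p) := by
  have : (scaleField ℓ m l c hc w).symm
      = IsFractionRing.ringEquivOfRingEquiv (scalePoly ℓ m l c hc w).toRingEquiv.symm := rfl
  rw [this]
  have h2 : (scalePoly ℓ m l c hc w).toRingEquiv.symm
      = ((scalePoly ℓ m l c hc w).symm).toRingEquiv := rfl
  rw [IsFractionRing.ringEquivOfRingEquiv_algebraMap, h2]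
  rfl

lemma scalePoly_symm_X (c : K0) (hc : c ≠ 0) (w v : Var ℓ m l) :
    (scalePoly ℓ m l c hc w).symm (X v)
      = if v = w then MvPolynomial.C c⁻¹ * X v else X v := by
  rw [scalePoly, AlgEquiv.ofAlgHom_symm]
  exact aeval_X _ v

lemma scalePoly_symm_C (c : K0) (hc : c ≠ 0) (w : Var ℓ m l) (c' : K0) :
    (scalePoly ℓ m l c hc w).symm (MvPolynomial.C c') = MvPolynomial.C c' := by
  have := ((scalePoly ℓ m l c hc w).symm).commutes c'
  simpa [MvPolynomial.algebraMap_eq] using this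

lemma uik_symm_cst (j : Fin ℓ) (k : Fin (m j)) (c : K0) :
    (uik ℓ m l d j k).symm (cst ℓ m l c) = cst ℓ m l c := by
  rw [cst, cstHom, RingHom.comp_apply, uik, scaleField_symm_algebraMap, scalePoly_symm_C]

lemma uik_symm_W (j : Fin ℓ) (k : Fin (m j)) (i : Fin ℓ) (t : Fin (l i)) :
    (uik ℓ m l d j k).symm (W ℓ m l i t) = W ℓ m l i t := by
  rw [W, uik, scaleField_symm_algebraMap, scalePoly_symm_X]
  simp

lemma uik_symm_V (j : Fin ℓ) (k : Fin (m j)) (j' : Fin ℓ) (p : Fin (m j')) :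
    (uik ℓ m l d j k).symm (V ℓ m l j' p)
      = (if (Sum.inl ⟨j', p⟩ : Var ℓ m l) = Sum.inl ⟨j, k⟩
          then cst ℓ m l (qElt ^ (d j))⁻¹ else 1) * V ℓ m l j' p := by
  rw [V, uik, scaleField_symm_algebraMap, scalePoly_symm_X]
  split_ifs with h
  · rw [map_mul]; rfl
  · rw [one_mul]

lemma V_ne_zero (i : Fin ℓ) (k : Fin (m i)) : V ℓ m l i k ≠ 0 := by
  rw [V, map_ne_zero_iff _ (IsFractionRing.injective (MvPolynomial (Var ℓ m l) K0) (FF ℓ m l))]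
  exact MvPolynomial.X_ne_zero _

lemma W_ne_zero (i : Fin ℓ) (t : Fin (l i)) : W ℓ m l i t ≠ 0 := by
  rw [W, map_ne_zero_iff _ (IsFractionRing.injective (MvPolynomial (Var ℓ m l) K0) (FF ℓ m l))]
  exact MvPolynomial.X_ne_zero _

lemma cst_ne_zero {c : K0} (hc : c ≠ 0) : cst ℓ m l c ≠ 0 := by
  rw [cst, cstHom, RingHom.comp_apply,
    map_ne_zero_iff _ (IsFractionRing.injective (MvPolynomial (Var ℓ m l) K0) (FF ℓ m l))]
  exact fun h => hc (MvPolynomial.C_injective _ _ (by rw [h, map_zero]))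

lemma cst_inv (c : K0) : cst ℓ m l c⁻¹ = (cst ℓ m l c)⁻¹ :=
  map_inv₀ (cstHom ℓ m l) c

lemma cst_zpow (c : K0) (e : ℤ) : cst ℓ m l (c ^ e) = cst ℓ m l c ^ e :=
  map_zpow₀ (cstHom ℓ m l) c e

lemma sElt_ne_zero : (sElt : K0) ≠ 0 := RatFunc.X_ne_zero

lemma qElt_ne_zero : (qElt : K0) ≠ 0 := pow_ne_zero _ RatFunc.X_ne_zero

lemma Kelt_ne_zero (i : Fin ℓ) : Kelt ℓ m l d a i ≠ 0 := by
  rw [Kelt]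
  apply mul_ne_zero
  apply mul_ne_zero
  · exact cst_ne_zero ℓ m l (zpow_ne_zero _ (sElt_ne_zero))
  · exact Finset.prod_ne_zero_iff.mpr fun t _ => inv_ne_zero (W_ne_zero ℓ m l i t)
  · exact Finset.prod_ne_zero_iff.mpr fun j' _ =>
      Finset.prod_ne_zero_iff.mpr fun p _ => zpow_ne_zero _ (V_ne_zero ℓ m l j' p)

lemma uik_symm_Kelt (i j : Fin ℓ) (k : Fin (m j)) :
    (uik ℓ m l d j k).symm (Kelt ℓ m l d a i)
      = cst ℓ m l (qElt ^ (-((d j : ℤ) * a j i))) * Kelt ℓ m l d a i := by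
  rw [Kelt, map_mul, map_mul, uik_symm_cst, map_prod, map_prod]
  have hW : ∀ t : Fin (l i), (uik ℓ m l d j k).symm (W ℓ m l i t)⁻¹ = (W ℓ m l i t)⁻¹ := by
    intro t; rw [map_inv₀, uik_symm_W]
  simp only [hW]
  have hV : ∀ (j' : Fin ℓ), (uik ℓ m l d j k).symm (∏ p : Fin (m j'), V ℓ m l j' p ^ a j' i)
      = (∏ p : Fin (m j'), (if (Sum.inl ⟨j', p⟩ : Var ℓ m l) = Sum.inl ⟨j, k⟩
          then cst ℓ m l (qElt ^ (d j))⁻¹ else 1) ^ a j' i)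
        * ∏ p : Fin (m j'), V ℓ m l j' p ^ a j' i := by
    intro j'
    rw [map_prod, ← Finset.prod_mul_distrib]
    refine Finset.prod_congr rfl fun p _ => ?_
    rw [map_zpow₀, uik_symm_V, mul_zpow]
  simp only [hV]
  rw [Finset.prod_mul_distrib]
  have hscal : (∏ j' : Fin ℓ, ∏ p : Fin (m j'),
      (if (Sum.inl ⟨j', p⟩ : Var ℓ m l) = Sum.inl ⟨j, k⟩
        then cst ℓ m l (qElt ^ (d j))⁻¹ else 1) ^ a j' i)
      = cst ℓ m l (qElt ^ (-((d j : ℤ) * a j i))) := by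
    rw [Finset.prod_eq_single j]
    · rw [Finset.prod_eq_single k]
      · rw [if_pos rfl, ← cst_zpow]
        congr 1
        rw [← zpow_natCast qElt (d j), ← zpow_neg, ← zpow_mul, neg_mul]
      · intro p _ hp
        rw [if_neg, one_zpow]
        exact fun h => hp (by simpa using h)
      · intro h; exact absurd (Finset.mem_univ k) h
    · intro j' _ hj'
      apply Finset.prod_eq_one
      intro p _
      rw [if_neg, one_zpow]
      exact fun h => hj' (congrArg Sigma.fst (Sum.inl.inj h))
    · intro h; exact absurd (Finset.mem_univ j) h
  rw [hscal]
  ring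

lemma aux_sum {F : Type*} [Field F] {n : ℕ} (Kl c x C : F) (B ψ : Fin n → F)
    (h : Kl * x = 1) :
    Kl * (C * ∑ k : Fin n, B k * (c * (x * ψ k)))
      = c * (C * ∑ k : Fin n, B k * ψ k) := by
  have h1 : ∀ k : Fin n, B k * (c * (x * ψ k)) = (c * x) * (B k * ψ k) := fun k => by ring
  simp only [h1, ← Finset.mul_sum]
  calc Kl * (C * (c * x * ∑ k : Fin n, B k * ψ k))
      = (Kl * x) * (c * (C * ∑ k : Fin n, B k * ψ k)) := by ring
    _ = c * (C * ∑ k : Fin n, B k * ψ k) := by rw [h, one_mul]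

/-- `K_i ∘ E_j ∘ K_i⁻¹ = q_i^{a_{ij}}·E_j`. -/
theorem qgroup_KEK
    (ℓ : ℕ) (hℓ : 1 ≤ ℓ)
    (a : Fin ℓ → Fin ℓ → ℤ) (ha : ∀ i, a i i = 2) (ha' : ∀ i j, i ≠ j → a i j ≤ 0)
    (d : Fin ℓ → ℕ) (hd : ∀ i, 0 < d i)
    (hsym : ∀ i j, (d i : ℤ) * a i j = (d j : ℤ) * a j i)
    (m : Fin ℓ → ℕ) (hm : ∀ i, 0 < m i)
    (l : Fin ℓ → ℕ) (hln : ∀ i, (l i : ℤ) = ∑ j, (m j : ℤ) * a j i)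
    (Rp Rm : (i : Fin ℓ) → Polynomial (WField ℓ l))
    (hR : ∀ i, Rp i * Rm i =
      ∏ t : Fin (l i), (Polynomial.X * Polynomial.C (Wsmall ℓ l i t)⁻¹
        - Polynomial.C (Wsmall ℓ l i t)))
    (i j : Fin ℓ) :
    Kop ℓ m l d a i ∘ Eop ℓ m l d a Rp j ∘ Kinv ℓ m l d a i
      = cst ℓ m l (qiz ℓ d i (a i j)) • Eop ℓ m l d a Rp j := by
  funext f
  simp only [Function.comp_apply, Pi.smul_apply, smul_eq_mul, Kop, Kinv, Eop]
  have hK : Kelt ℓ m l d a i * (Kelt ℓ m l d a i)⁻¹ = 1 :=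
    mul_inv_cancel₀ (Kelt_ne_zero ℓ m l d a i)
  have hq : ((qElt : K0) ^ (-((d j : ℤ) * a j i)))⁻¹ = qiz ℓ d i (a i j) := by
    rw [qiz, ← zpow_neg, neg_neg, ← hsym i j]
  have key : ∀ k : Fin (m j),
      (uik ℓ m l d j k).symm ((Kelt ℓ m l d a i)⁻¹ * f)
        = cst ℓ m l (qiz ℓ d i (a i j))
            * ((Kelt ℓ m l d a i)⁻¹ * (uik ℓ m l d j k).symm f) := by
    intro k
    rw [map_mul, map_inv₀, uik_symm_Kelt, mul_inv, ← cst_inv, hq, mul_assoc]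
  simp only [key]
  exact aux_sum _ _ _ _ _ _ hK
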